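/- Under the same setting, if two light travel arcs from the same origin terminal k enter the same ground-departure node m at terminal k', originating from arrival-ground nodes n1 and n2 with time(n1) < time(n2), then any feasible solution using the arc from n1 can be transformed into a feasible solution of no greater cost using the arc from n2, by letting the flow idle on ground arcs at k from n1 to n2 before departing; hence only the arc from the latest such origin node needs to be retained. -/

import Mathlib

/-! The `x a1` units carried by `a1` can instead wait at the origin terminal along the ground
walk from `tail a1` to `tail a2` and then leave on `a2`. The walk moves one unit of net inflow
from `tail a1` to `tail a2`, and trading `a1` for `a2` (same head) moves it back, so flow
conservation survives. Ground arcs are free and uncapacitated, and since `a1` and `a2` have the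
same costs, merging both flows on `a2` costs no more because the ceiling is subadditive. -/

open Finset

section NetInflow

variable {V A M : Type*} [Fintype A] [DecidableEq V] [AddCommGroup M] (tail head : A → V)

def netInflow : (A → M) →+ V → M where
  toFun y n := ∑ l ∈ univ.filter (head · = n), y l - ∑ l ∈ univ.filter (tail · = n), y l
  map_zero' := by funext n; simp
  map_add' y z := by funext n; simp only [Pi.add_apply, sum_add_distrib]; abel

theorem netInflow_single [DecidableEq A] (a : A) (m : M) :
    netInflow tail head (Pi.single a m) = Pi.single (head a) m - Pi.single (tail a) m := by
  funext n
  simp [netInflow, Pi.single_apply, eq_comm]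

theorem netInflow_natCast_eq_zero_iff (x : A → ℕ) :
    netInflow tail head (fun l => (x l : ℤ)) = 0 ↔
      ∀ n, ∑ l ∈ univ.filter (head · = n), x l = ∑ l ∈ univ.filter (tail · = n), x l := by
  simp only [funext_iff, netInflow, AddMonoidHom.coe_mk, ZeroHom.coe_mk, Pi.zero_apply,
    sub_eq_zero]
  exact forall_congr' fun n => by exact_mod_cast Iff.rfl

/-- `p l` counts how often a walk from `u` to `v` along arcs satisfying `P` uses `l`. -/
theorem exists_flow_of_reflTransGen [DecidableEq A] (P : A → Prop) {u v : V}
    (h : Relation.ReflTransGen (fun u v => ∃ l, P l ∧ tail l = u ∧ head l = v) u v) :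
    ∃ p : A → ℕ, (∀ l, ¬ P l → p l = 0) ∧
      netInflow tail head (fun l => (p l : ℤ)) = Pi.single v 1 - Pi.single u 1 := by
  induction h with
  | refl => exact ⟨0, fun _ _ => rfl, by rw [sub_self]; exact map_zero _⟩
  | tail _ hstep ih =>
    obtain ⟨p, hpP, hp⟩ := ih
    obtain ⟨l, hl, rfl, rfl⟩ := hstep
    refine ⟨p + Pi.single l 1, fun k hk => ?_, ?_⟩
    · have : k ≠ l := fun h => hk (h ▸ hl)
      simp [hpP k hk, this]
    · have hcast : (fun k => ((p + Pi.single l 1 : A → ℕ) k : ℤ))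
          = (fun k => (p k : ℤ)) + Pi.single l 1 := by
        funext k; by_cases hk : k = l <;> simp [hk]
      rw [hcast, map_add, hp, netInflow_single]
      abel

end NetInflow

section Reroute

variable {V A : Type*} [DecidableEq A]

def reroute (x p : A → ℕ) (a₁ a₂ : A) : A → ℕ :=
  Function.update (x + x a₁ • p + Pi.single a₂ (x a₁)) a₁ 0

variable {x p : A → ℕ} {a₁ a₂ : A}

@[simp]
theorem reroute_apply_left : reroute x p a₁ a₂ a₁ = 0 := by
  simp [reroute]

theorem reroute_apply_right (hne : a₁ ≠ a₂) (hp : p a₂ = 0) :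
    reroute x p a₁ a₂ a₂ = x a₂ + x a₁ := by
  simp [reroute, hne.symm, hp]

theorem reroute_apply_of_ne {l : A} (h₁ : l ≠ a₁) (h₂ : l ≠ a₂) (hp : p l = 0) :
    reroute x p a₁ a₂ l = x l := by
  simp [reroute, h₁, h₂, hp]

theorem natCast_reroute (hne : a₁ ≠ a₂) (hp : p a₁ = 0) :
    (fun l => (reroute x p a₁ a₂ l : ℤ)) = (fun l => (x l : ℤ))
      + (x a₁ : ℤ) • ((fun l => (p l : ℤ)) + Pi.single a₂ 1 - Pi.single a₁ 1) := by
  funext l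
  by_cases h₁ : l = a₁
  · subst h₁
    simp [reroute, hp, hne]
  · by_cases h₂ : l = a₂
    · subst h₂
      simp [reroute, h₁, mul_add, add_assoc]
    · simp [reroute, h₁, h₂]

theorem netInflow_reroute [Fintype A] [DecidableEq V] {tail head : A → V}
    (hx : netInflow tail head (fun l => (x l : ℤ)) = 0)
    (hp : netInflow tail head (fun l => (p l : ℤ)) = Pi.single (tail a₂) 1 - Pi.single (tail a₁) 1)
    (hne : a₁ ≠ a₂) (hp₁ : p a₁ = 0) (hhead : head a₂ = head a₁) :
    netInflow tail head (fun l => (reroute x p a₁ a₂ l : ℤ)) = 0 := by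
  rw [natCast_reroute hne hp₁, map_add, map_zsmul, map_sub, map_add, hx, hp, netInflow_single,
    netInflow_single, hhead]
  abel_nf

end Reroute

/-- `e` per started vehicle of capacity `ρ` plus `g` per unit. -/
def legCost (e g : ℚ) (ρ : ℕ) (q : ℕ) : ℚ := e * ⌈(q : ℚ) / ρ⌉ + g * q

@[simp]
theorem legCost_zero (e g : ℚ) (ρ : ℕ) : legCost e g ρ 0 = 0 := by
  simp [legCost]

theorem legCost_add_le {e : ℚ} (he : 0 ≤ e) (g : ℚ) (ρ m k : ℕ) :
    legCost e g ρ (m + k) ≤ legCost e g ρ m + legCost e g ρ k := by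
  have hceil : ⌈((m + k : ℕ) : ℚ) / ρ⌉ ≤ ⌈(m : ℚ) / ρ⌉ + ⌈(k : ℚ) / ρ⌉ := by
    rw [Nat.cast_add, add_div]
    exact Int.ceil_add_le _ _
  have := mul_le_mul_of_nonneg_left (Int.cast_le (R := ℚ) |>.mpr hceil) he
  unfold legCost
  push_cast at this ⊢
  linarith

theorem sum_le_sum_of_le_on_pair {ι M : Type*} [Fintype ι] [DecidableEq ι] [AddCommMonoid M]
    [PartialOrder M] [IsOrderedAddMonoid M] {f f' : ι → M} {i j : ι} (hij : i ≠ j)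
    (hpair : f i + f j ≤ f' i + f' j) (hrest : ∀ k, k ≠ i → k ≠ j → f k = f' k) :
    ∑ k, f k ≤ ∑ k, f' k := by
  rw [← sum_add_sum_compl {i, j} f, ← sum_add_sum_compl {i, j} f', sum_pair hij, sum_pair hij,
    sum_congr rfl fun k hk => hrest k (by aesop) (by aesop)]
  gcongr

theorem latest_origin_filtering_general
    {V A : Type*} [Fintype A] [DecidableEq V] [DecidableEq A]
    (tail head : A → V)
    (isGround : A → Prop) [DecidablePred isGround]
    (cap : A → ℕ∞)
    (e g : A → ℚ) (ρ : ℕ)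
    (he : ∀ l, 0 ≤ e l)
    (cost : (A → ℕ) → ℚ)
    (hcost : ∀ x, cost x
      = ∑ l, if isGround l then 0 else e l * ⌈(x l : ℚ) / ρ⌉ + g l * x l)
    (Feasible : (A → ℕ) → Prop)
    (hFeas : ∀ x, Feasible x ↔
      ((∀ n : V, ∑ l ∈ Finset.univ.filter (fun l => head l = n), x l
            = ∑ l ∈ Finset.univ.filter (fun l => tail l = n), x l)
        ∧ ∀ l, (x l : ℕ∞) ≤ cap l))
    (hgroundcap : ∀ l, isGround l → cap l = ⊤)
    (a1 a2 : A) (hne : a1 ≠ a2)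
    (hlight1 : ¬ isGround a1) (hlight2 : ¬ isGround a2)
    (hsamehead : head a2 = head a1)
    (hcap2 : cap a2 = ⊤)
    (hecost : e a2 = e a1) (hgcost : g a2 = g a1)
    (hreach : Relation.ReflTransGen
      (fun u v => ∃ l, isGround l ∧ tail l = u ∧ head l = v) (tail a1) (tail a2)) :
    ∀ x, Feasible x →
      ∃ x', Feasible x' ∧ cost x' ≤ cost x ∧
        x' a1 = 0 ∧ x' a2 = x a2 + x a1 ∧
        ∀ l, ¬ isGround l → l ≠ a1 → l ≠ a2 → x' l = x l := by
  intro x hx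
  obtain ⟨hcons, hcap⟩ := (hFeas x).mp hx
  obtain ⟨p, hp_ground, hp⟩ := exists_flow_of_reflTransGen tail head isGround hreach
  have hx₂ := reroute_apply_right (x := x) hne (hp_ground a2 hlight2)
  have hother (l) (hl : ¬ isGround l) (h₁ : l ≠ a1) (h₂ : l ≠ a2) : reroute x p a1 a2 l = x l :=
    reroute_apply_of_ne h₁ h₂ (hp_ground l hl)
  refine ⟨reroute x p a1 a2, (hFeas _).mpr ⟨?_, fun l => ?_⟩, ?_, reroute_apply_left, hx₂, hother⟩
  · rw [← netInflow_natCast_eq_zero_iff] at hcons ⊢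
    exact netInflow_reroute hcons hp hne (hp_ground a1 hlight1) hsamehead
  · by_cases hl : isGround l
    · simp [hgroundcap l hl]
    by_cases h₁ : l = a1
    · simp [h₁]
    by_cases h₂ : l = a2
    · simp [h₂, hcap2]
    · simpa [hother l hl h₁ h₂] using hcap l
  · simp only [hcost]
    refine sum_le_sum_of_le_on_pair hne ?_ fun l h₁ h₂ => ?_
    · simp only [hlight1, hlight2, if_false, reroute_apply_left, hx₂, hecost, hgcost]
      change legCost (e a1) (g a1) ρ 0 + legCost (e a1) (g a1) ρ (x a2 + x a1)
        ≤ legCost (e a1) (g a1) ρ (x a1) + legCost (e a1) (g a1) ρ (x a2)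
      rw [legCost_zero, zero_add, add_comm (legCost _ _ _ (x a1))]
      exact legCost_add_le (he a1) _ _ _ _
    · by_cases hl : isGround l
      · simp [hl]
      · simp [hl, hother l hl h₁ h₂]

/-- **Latest-origin filtering.** In the same space-time network setting (ground
arcs idle forward in time at zero cost and unbounded capacity; light travel arcs
between the same terminal pair have identical costs), suppose two light travel
arcs `a1` and `a2` from the same origin terminal enter the same ground-departure
node `m`, originating from arrival-ground nodes `n1` and `n2` with
`time n1 < time n2`, where `n2` is reachable from `n1` by idling on ground arcs.
Then any feasible solution using `a1` can be transformed into a feasible solution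
of no greater cost that lets the flow idle on ground arcs from `n1` to `n2` and
departs on `a2` instead, leaving all other non-ground arcs unchanged; hence only
the arc from the latest such origin node needs to be retained. -/
theorem latest_origin_filtering
    {V A : Type*} [Fintype V] [Fintype A] [DecidableEq V] [DecidableEq A]
    (tail head : A → V) (time : V → ℚ)
    (isGround : A → Prop) [DecidablePred isGround]
    (cap : A → ℕ∞)
    (e g : A → ℚ) (ρ : ℕ) (hρ : 0 < ρ)
    (he : ∀ l, 0 ≤ e l) (hg : ∀ l, 0 ≤ g l)
    (cost : (A → ℕ) → ℚ)
    (hcost : ∀ x, cost x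
      = ∑ l, if isGround l then 0 else e l * ⌈(x l : ℚ) / ρ⌉ + g l * x l)
    (Feasible : (A → ℕ) → Prop)
    (hFeas : ∀ x, Feasible x ↔
      ((∀ n : V, ∑ l ∈ Finset.univ.filter (fun l => head l = n), x l
            = ∑ l ∈ Finset.univ.filter (fun l => tail l = n), x l)
        ∧ ∀ l, (x l : ℕ∞) ≤ cap l))
    (hgroundcap : ∀ l, isGround l → cap l = ⊤)
    (a1 a2 : A) (hne : a1 ≠ a2)
    (hlight1 : ¬ isGround a1) (hlight2 : ¬ isGround a2)
    (hsamehead : head a2 = head a1)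
    (htime : time (tail a1) < time (tail a2))
    (hcap2 : cap a2 = ⊤)
    (hecost : e a2 = e a1) (hgcost : g a2 = g a1)
    (hreach : Relation.ReflTransGen
      (fun u v => ∃ l, isGround l ∧ tail l = u ∧ head l = v) (tail a1) (tail a2)) :
    ∀ x, Feasible x →
      ∃ x', Feasible x' ∧ cost x' ≤ cost x ∧
        x' a1 = 0 ∧ x' a2 = x a2 + x a1 ∧
        ∀ l, ¬ isGround l → l ≠ a1 → l ≠ a2 → x' l = x l :=
  latest_origin_filtering_general tail head isGround cap e g ρ he cost hcost Feasible hFeas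
    hgroundcap a1 a2 hne hlight1 hlight2 hsamehead hcap2 hecost hgcost hreach
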